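/- Let m, n ∈ ℕ with 2 ≤ m ≤ n and let ρ_{m,n,max} = (1/m) ∑_{i,j=1}^m e_{ij} ⊗ f_{ij} in M_m ⊗ M_n, where {e_{ij}} and {f_{ij}} are the matrix units of M_m and M_n respectively. Then ρ_{m,n,max} is an m⊗n state with N(ρ_{m,n,max}) = 1 and D(ρ_{m,n,max}) = 1; consequently N(ρ_{m,n,max})² − D(ρ_{m,n,max}) = 0. -/

import Mathlib

/-!
Write `ρ = m⁻¹ |u⟩⟨u|` with `u = ∑ᵢ eᵢ ⊗ E eᵢ`, where `E : ℂ^m → ℂ^n` is the isometry induced by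
`Fin.castLE`. Entrywise, `(ρ^Γ)† ρ^Γ = m⁻² (E†E ⊗ EE†) = m⁻² (1 ⊗ EE†)`, whose positive square
root `m⁻¹ (1 ⊗ EE†)` has trace `m`; hence `‖ρ^Γ‖₁ = m` and `N(ρ) = 1`.

For any orthonormal basis `ψ` of `ℂ^m` the same vector is `u = ∑ₖ ψₖ ⊗ E ψ̄ₖ`, and the Schmidt
vectors `wₖ = ψₖ ⊗ E ψ̄ₖ` are orthonormal and satisfy `(|ψₖ⟩⟨ψₖ| ⊗ 1) wₗ = δₖₗ wₗ`. In the frame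
`W = (wₖ)` this reads `ρ = W (J/m) W†` and `Π^A(ρ) = W (1/m) W†`, with `J` the all-ones matrix,
so `‖ρ - Π^A(ρ)‖² = ‖(J - 1)/m‖² = (m - 1)/m` for every measurement, and `D(ρ) = 1`.
-/

open Matrix BigOperators Polynomial
open scoped Kronecker ComplexOrder

noncomputable section

/-- Squared Hilbert–Schmidt norm `‖C‖² = Tr(CᴴC)`. -/
def hsNormSq {d : Type*} [Fintype d] (C : Matrix d d ℂ) : ℝ :=
  (Matrix.trace (Cᴴ * C)).re

/-- Trace norm `‖X‖₁ = Tr √(XᴴX)`. -/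
def traceNorm {d : Type*} [Fintype d] [DecidableEq d] (X : Matrix d d ℂ) : ℝ :=
  (((Matrix.posSemidef_conjTranspose_mul_self X).isHermitian.eigenvectorUnitary : Matrix d d ℂ) *
    diagonal (((↑) : ℝ → ℂ) ∘ (√·) ∘ (Matrix.posSemidef_conjTranspose_mul_self X).isHermitian.eigenvalues) *
    (star (Matrix.posSemidef_conjTranspose_mul_self X).isHermitian.eigenvectorUnitary :
      Matrix d d ℂ)).trace.re

/-- Partial transpose on the first factor: `ρ^Γ((i,k),(j,l)) = ρ((j,k),(i,l))`. -/
def ptranspose {m n : ℕ} (ρ : Matrix (Fin m × Fin n) (Fin m × Fin n) ℂ) :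
    Matrix (Fin m × Fin n) (Fin m × Fin n) ℂ :=
  Matrix.of fun p q => ρ (q.1, p.2) (p.1, q.2)

/-- Negativity `N(ρ) = (‖ρ^Γ‖₁ - 1)/(m-1)`. -/
def negativity {m n : ℕ} (ρ : Matrix (Fin m × Fin n) (Fin m × Fin n) ℂ) : ℝ :=
  (traceNorm (ptranspose ρ) - 1) / ((m : ℝ) - 1)

/-- `ψ` is an orthonormal basis of `ℂ^m` (an orthonormal family of `m` vectors). -/
def IsONB {m : ℕ} (ψ : Fin m → (Fin m → ℂ)) : Prop :=
  ∀ k l, (∑ i, star (ψ k i) * ψ l i) = if k = l then 1 else 0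

/-- The rank-one projector `|v⟩⟨v|`. -/
def proj {m : ℕ} (v : Fin m → ℂ) : Matrix (Fin m) (Fin m) ℂ :=
  Matrix.vecMulVec v (fun j => star (v j))

/-- The von Neumann measurement map
`Π^A(ρ) = ∑ k, (|ψ_k⟩⟨ψ_k| ⊗ I_n) ρ (|ψ_k⟩⟨ψ_k| ⊗ I_n)`. -/
def piA {m n : ℕ} (ψ : Fin m → (Fin m → ℂ))
    (ρ : Matrix (Fin m × Fin n) (Fin m × Fin n) ℂ) :
    Matrix (Fin m × Fin n) (Fin m × Fin n) ℂ :=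
  ∑ k, (proj (ψ k) ⊗ₖ (1 : Matrix (Fin n) (Fin n) ℂ)) * ρ *
       (proj (ψ k) ⊗ₖ (1 : Matrix (Fin n) (Fin n) ℂ))

/-- Geometric discord
`D(ρ) = (m/(m-1)) · inf over von Neumann measurements of ‖ρ - Π^A(ρ)‖²`. -/
def gd {m n : ℕ} (ρ : Matrix (Fin m × Fin n) (Fin m × Fin n) ℂ) : ℝ :=
  ((m : ℝ) / ((m : ℝ) - 1)) *
    ⨅ ψ : {ψ : Fin m → (Fin m → ℂ) // IsONB ψ}, hsNormSq (ρ - piA ψ.1 ρ)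

/-- An `m ⊗ n` state: positive semidefinite with trace one. -/
def IsState {m n : ℕ} (ρ : Matrix (Fin m × Fin n) (Fin m × Fin n) ℂ) : Prop :=
  ρ.PosSemidef ∧ ρ.trace = 1

/-- Reindex a `6 × 6` matrix by `Fin 2 × Fin 3` with the ordering
`(1,1),(1,2),(1,3),(2,1),(2,2),(2,3)`. -/
def ofM6 (M : Matrix (Fin 6) (Fin 6) ℂ) :
    Matrix (Fin 2 × Fin 3) (Fin 2 × Fin 3) ℂ :=
  Matrix.of fun p q =>
    M ⟨p.1.val * 3 + p.2.val, by have := p.1.isLt; have := p.2.isLt; omega⟩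
      ⟨q.1.val * 3 + q.2.val, by have := q.1.isLt; have := q.2.isLt; omega⟩

/-- The family of states `ρ₁(a,b)`. -/
def rho1 (a b : ℝ) : Matrix (Fin 2 × Fin 3) (Fin 2 × Fin 3) ℂ :=
  ofM6 ((1 / (2 * ((a : ℂ)^2 + (b : ℂ)^2))) •
    !![(a:ℂ)^2, 0, 0, 0, (a:ℂ)*(b:ℂ), 0;
       0, (b:ℂ)^2, 0, 0, 0, (a:ℂ)*(b:ℂ);
       0, 0, 0, 0, 0, 0;
       0, 0, 0, 0, 0, 0;
       (a:ℂ)*(b:ℂ), 0, 0, 0, (b:ℂ)^2, 0;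
       0, (a:ℂ)*(b:ℂ), 0, 0, 0, (a:ℂ)^2])

namespace Matrix

variable {α β κ ι R : Type*}

def khatriRao [Mul R] (A : Matrix α κ R) (B : Matrix β κ R) : Matrix (α × β) κ R :=
  of fun p k => A p.1 k * B p.2 k

section KhatriRao

variable [CommSemiring R]

theorem conjTranspose_khatriRao_mul_khatriRao [Fintype α] [Fintype β] [StarRing R]
    (A C : Matrix α κ R) (B D : Matrix β κ R) :
    (khatriRao A B)ᴴ * khatriRao C D = (Aᴴ * C) ⊙ (Bᴴ * D) := by
  ext k l
  simp only [khatriRao, mul_apply, conjTranspose_apply, of_apply, hadamard_apply,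
    Fintype.sum_prod_type, Finset.sum_mul_sum, star_mul']
  exact Finset.sum_congr rfl fun _ _ => Finset.sum_congr rfl fun _ _ => by ring

theorem kronecker_one_mul_khatriRao [Fintype α] [Fintype β] [DecidableEq β] (A : Matrix α α R)
    (B : Matrix α κ R) (C : Matrix β κ R) :
    (A ⊗ₖ (1 : Matrix β β R)) * khatriRao B C = khatriRao (A * B) C := by
  ext p k
  simp [khatriRao, mul_apply, Fintype.sum_prod_type, one_apply, Finset.sum_mul, mul_assoc]

theorem khatriRao_mul_single [Fintype κ] [DecidableEq κ] (B : Matrix α κ R) (C : Matrix β κ R)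
    (k : κ) : khatriRao B C * single k k (1 : R) = khatriRao (B * single k k (1 : R)) C := by
  ext p l
  by_cases h : l = k
  · subst h; simp [khatriRao]
  · simp only [khatriRao, mul_single_apply_of_ne (hbj := h), of_apply, zero_mul]

end KhatriRao

theorem conjTranspose_submatrix_one_mul_self [Fintype κ] [DecidableEq κ] [DecidableEq ι]
    [Semiring R] [StarRing R] {f : ι → κ} (hf : Function.Injective f) :
    ((1 : Matrix κ κ R).submatrix id f)ᴴ * (1 : Matrix κ κ R).submatrix id f = 1 := by
  rw [conjTranspose_submatrix, conjTranspose_one, ← submatrix_mul _ _ _ _ _ Function.bijective_id,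
    one_mul, submatrix_one _ hf]

end Matrix

theorem mul_vecMulVec_one_mul_conjTranspose {d e : Type*} [Fintype e] (W : Matrix d e ℂ) :
    W * (vecMulVec 1 1 : Matrix e e ℂ) * Wᴴ = vecMulVec (W *ᵥ 1) (star (W *ᵥ 1)) := by
  rw [mul_vecMulVec, vecMulVec_mul, star_mulVec, star_one]

theorem hsNormSq_eq_sum_normSq {d : Type*} [Fintype d] (A : Matrix d d ℂ) :
    hsNormSq A = ∑ i, ∑ j, Complex.normSq (A i j) := by
  simp only [hsNormSq, trace, diag_apply, mul_apply, conjTranspose_apply, Complex.re_sum]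
  rw [Finset.sum_comm]
  simp [Complex.normSq_apply]

section Isometry

variable {d e : Type*} [Fintype d] [Fintype e] [DecidableEq e]

theorem hsNormSq_mul_mul_conjTranspose {W : Matrix d e ℂ} (hW : Wᴴ * W = 1)
    (A : Matrix e e ℂ) : hsNormSq (W * A * Wᴴ) = hsNormSq A := by
  rw [hsNormSq, hsNormSq, conjTranspose_mul, conjTranspose_mul, conjTranspose_conjTranspose]
  congr 1
  calc trace (W * (Aᴴ * Wᴴ) * (W * A * Wᴴ)) = trace (W * Aᴴ * (Wᴴ * W) * A * Wᴴ) := by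
        simp only [Matrix.mul_assoc]
    _ = trace (Aᴴ * A) := by
        rw [hW, Matrix.mul_one, trace_mul_comm, ← Matrix.mul_assoc, ← Matrix.mul_assoc, hW,
          Matrix.one_mul]

theorem trace_mul_mul_conjTranspose {W : Matrix d e ℂ} (hW : Wᴴ * W = 1) (A : Matrix e e ℂ) :
    trace (W * A * Wᴴ) = trace A := by
  rw [trace_mul_comm, ← Matrix.mul_assoc, hW, Matrix.one_mul]

end Isometry

open scoped MatrixOrder in
theorem traceNorm_eq_re_trace_of_mul_self_eq {d : Type*} [Fintype d] [DecidableEq d]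
    {X D : Matrix d d ℂ} (hD : D.PosSemidef) (h : D * D = Xᴴ * X) :
    traceNorm X = D.trace.re := by
  have hsqrt : cfc Real.sqrt (Xᴴ * X) = D := by
    rw [← h, ← cfcₙ_eq_cfc, ← pow_two, ← CFC.sqrt_eq_real_sqrt _ (hD.pow 2).nonneg,
      CFC.sqrt_sq D hD.nonneg]
  have e := (posSemidef_conjTranspose_mul_self X).isHermitian.cfc_eq Real.sqrt
  rw [IsHermitian.cfc, Unitary.conjStarAlgAut_apply] at e
  exact congrArg (fun M => M.trace.re) (e.symm.trans hsqrt)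

section Measurement

variable {m n : ℕ} {ψ : Fin m → Fin m → ℂ}

theorem IsONB.mul_conjTranspose (hψ : IsONB ψ) : of ψ * (of ψ)ᴴ = 1 := by
  ext k l
  simpa only [mul_apply, conjTranspose_apply, of_apply, one_apply, mul_comm, eq_comm] using hψ l k

theorem IsONB.conjTranspose_mul (hψ : IsONB ψ) : (of ψ)ᴴ * of ψ = 1 :=
  mul_eq_one_comm.mp hψ.mul_conjTranspose

theorem isONB_one : IsONB (1 : Matrix (Fin m) (Fin m) ℂ) := by
  intro k l
  simp [one_apply]

theorem IsONB.proj_mul_transpose (hψ : IsONB ψ) (k : Fin m) :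
    proj (ψ k) * (of ψ)ᵀ = (of ψ)ᵀ * single k k 1 := by
  ext i l
  have hentry : (proj (ψ k) * (of ψ)ᵀ) i l = ψ k i * ∑ j, star (ψ k j) * ψ l j := by
    simp only [proj, mul_apply, vecMulVec_apply, transpose_apply, of_apply, Finset.mul_sum,
      mul_assoc]
  rw [hentry, hψ k l]
  by_cases h : l = k
  · subst h
    simp
  · simp [h, Ne.symm h, mul_single_apply_of_ne]

theorem conjTranspose_proj_kronecker_one (v : Fin m → ℂ) :
    (proj v ⊗ₖ (1 : Matrix (Fin n) (Fin n) ℂ))ᴴ =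
      proj v ⊗ₖ (1 : Matrix (Fin n) (Fin n) ℂ) := by
  rw [conjTranspose_kronecker, proj, conjTranspose_vecMulVec, conjTranspose_one]
  congr 1
  ext i j
  simp [vecMulVec_apply]

theorem piA_mul_mul_conjTranspose {W : Matrix (Fin m × Fin n) (Fin m) ℂ}
    (hW : ∀ k,
      (proj (ψ k) ⊗ₖ (1 : Matrix (Fin n) (Fin n) ℂ)) * W = W * single k k (1 : ℂ))
    (A : Matrix (Fin m) (Fin m) ℂ) : piA ψ (W * A * Wᴴ) = W * diagonal A.diag * Wᴴ := by
  rw [piA, ← sum_single_eq_diagonal, Matrix.mul_sum, Matrix.sum_mul]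
  refine Finset.sum_congr rfl fun k _ => ?_
  have hWconj :
      Wᴴ * (proj (ψ k) ⊗ₖ (1 : Matrix (Fin n) (Fin n) ℂ)) = single k k (1 : ℂ) * Wᴴ := by
    rw [← conjTranspose_proj_kronecker_one, ← conjTranspose_mul, hW, conjTranspose_mul,
      conjTranspose_single, star_one]
  calc _ = (proj (ψ k) ⊗ₖ (1 : Matrix (Fin n) (Fin n) ℂ)) * W * A *
        (Wᴴ * (proj (ψ k) ⊗ₖ (1 : Matrix (Fin n) (Fin n) ℂ))) := by
        simp only [Matrix.mul_assoc]
    _ = W * (single k k 1 * A * single k k 1) * Wᴴ := by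
        rw [hW, hWconj]
        simp only [Matrix.mul_assoc]
    _ = W * single k k (A.diag k) * Wᴴ := by
        rw [single_mul_mul_single, one_mul, mul_one, diag_apply]

end Measurement

section MaximallyEntangled

variable {m n : ℕ} {ψ : Fin m → Fin m → ℂ} {E : Matrix (Fin n) (Fin m) ℂ}

def vectorize (E : Matrix (Fin n) (Fin m) ℂ) : Fin m × Fin n → ℂ := fun p => E p.2 p.1

def maxEntangledState (E : Matrix (Fin n) (Fin m) ℂ) :
    Matrix (Fin m × Fin n) (Fin m × Fin n) ℂ :=
  (m : ℂ)⁻¹ • vecMulVec (vectorize E) (star (vectorize E))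

theorem sum_single_kronecker_single (f : Fin m → Fin n) :
    ∑ i, ∑ j, single i j (1 : ℂ) ⊗ₖ single (f i) (f j) (1 : ℂ) =
      vecMulVec (vectorize ((1 : Matrix (Fin n) (Fin n) ℂ).submatrix id f))
        (star (vectorize ((1 : Matrix (Fin n) (Fin n) ℂ).submatrix id f))) := by
  ext p q
  simp only [single_kronecker_single, Matrix.sum_apply, single_apply, Prod.ext_iff,
    vecMulVec_apply, vectorize, submatrix_apply, id, one_apply, Pi.star_apply]
  simp [ite_and, eq_comm]
  split_ifs <;> rfl

/-- Column `k` is `ψₖ ⊗ E ψ̄ₖ`. -/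
def schmidtFrame (ψ : Fin m → Fin m → ℂ) (E : Matrix (Fin n) (Fin m) ℂ) :
    Matrix (Fin m × Fin n) (Fin m) ℂ :=
  khatriRao (of ψ)ᵀ (E * (of ψ)ᴴ)

theorem conjTranspose_schmidtFrame_mul_self (hψ : IsONB ψ) (hE : Eᴴ * E = 1) :
    (schmidtFrame ψ E)ᴴ * schmidtFrame ψ E = 1 := by
  rw [schmidtFrame, conjTranspose_khatriRao_mul_khatriRao,
    conjTranspose_transpose_eq_transpose_conjTranspose, ← transpose_mul,
    hψ.mul_conjTranspose, conjTranspose_mul, conjTranspose_conjTranspose, Matrix.mul_assoc,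
    ← Matrix.mul_assoc Eᴴ, hE, Matrix.one_mul, hψ.mul_conjTranspose, transpose_one,
    hadamard_one, diag_one]
  exact diagonal_one

theorem schmidtFrame_mulVec_one (hψ : IsONB ψ) : schmidtFrame ψ E *ᵥ 1 = vectorize E := by
  ext p
  calc (schmidtFrame ψ E *ᵥ 1) p = (E * (of ψ)ᴴ * of ψ) p.2 p.1 := by
        simp only [schmidtFrame, khatriRao, mulVec, dotProduct, mul_apply (M := E * (of ψ)ᴴ),
          of_apply, transpose_apply, Pi.one_apply, one_mul, mul_comm]
    _ = vectorize E p := by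
        rw [Matrix.mul_assoc, hψ.conjTranspose_mul, Matrix.mul_one, vectorize]

theorem proj_kronecker_one_mul_schmidtFrame (hψ : IsONB ψ) (k : Fin m) :
    (proj (ψ k) ⊗ₖ (1 : Matrix (Fin n) (Fin n) ℂ)) * schmidtFrame ψ E =
      schmidtFrame ψ E * single k k (1 : ℂ) := by
  rw [schmidtFrame, kronecker_one_mul_khatriRao, hψ.proj_mul_transpose, khatriRao_mul_single]

theorem maxEntangledState_eq_schmidtFrame (hψ : IsONB ψ) :
    maxEntangledState E =
      schmidtFrame ψ E * ((m : ℂ)⁻¹ • vecMulVec 1 1 : Matrix (Fin m) (Fin m) ℂ) *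
        (schmidtFrame ψ E)ᴴ := by
  rw [Matrix.mul_smul, Matrix.smul_mul, mul_vecMulVec_one_mul_conjTranspose,
    schmidtFrame_mulVec_one hψ, maxEntangledState]

theorem isState_maxEntangledState (hm : m ≠ 0) (hE : Eᴴ * E = 1) :
    IsState (maxEntangledState E) := by
  rw [maxEntangledState_eq_schmidtFrame isONB_one]
  constructor
  · have hJ := posSemidef_vecMulVec_self_star (1 : Fin m → ℂ)
    rw [star_one] at hJ
    exact (hJ.smul (inv_nonneg.mpr (Nat.cast_nonneg m))).mul_mul_conjTranspose_same _
  · rw [trace_mul_mul_conjTranspose (conjTranspose_schmidtFrame_mul_self isONB_one hE),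
      trace_smul, trace_vecMulVec]
    simp [hm]

theorem ptranspose_smul (c : ℂ) (X : Matrix (Fin m × Fin n) (Fin m × Fin n) ℂ) :
    ptranspose (c • X) = c • ptranspose X :=
  rfl

theorem conjTranspose_ptranspose_mul_ptranspose_maxEntangledState (E : Matrix (Fin n) (Fin m) ℂ) :
    (ptranspose (maxEntangledState E))ᴴ * ptranspose (maxEntangledState E) =
      ((m : ℂ)⁻¹ * (m : ℂ)⁻¹) • ((Eᴴ * E) ⊗ₖ (E * Eᴴ)) := by
  rw [maxEntangledState, ptranspose_smul, conjTranspose_smul, smul_mul_smul, star_inv₀,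
    star_natCast]
  congr 1
  ext p q
  simp only [ptranspose, vectorize, mul_apply, conjTranspose_apply, of_apply, vecMulVec_apply,
    kroneckerMap_apply, Fintype.sum_prod_type, Finset.sum_mul_sum, Pi.star_apply, star_mul',
    star_star]
  rw [Finset.sum_comm]
  exact Finset.sum_congr rfl fun _ _ => Finset.sum_congr rfl fun _ _ => by ring

theorem traceNorm_ptranspose_maxEntangledState (hE : Eᴴ * E = 1) :
    traceNorm (ptranspose (maxEntangledState E)) = m := by
  set D := (m : ℂ)⁻¹ • ((1 : Matrix (Fin m) (Fin m) ℂ) ⊗ₖ (E * Eᴴ))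
  have hD : D.PosSemidef :=
    (PosSemidef.one.kronecker (posSemidef_self_mul_conjTranspose E)).smul
      (inv_nonneg.mpr (Nat.cast_nonneg m))
  have hDD : D * D =
      (ptranspose (maxEntangledState E))ᴴ * ptranspose (maxEntangledState E) := by
    rw [conjTranspose_ptranspose_mul_ptranspose_maxEntangledState, hE, smul_mul_smul,
      ← mul_kronecker_mul, Matrix.one_mul, Matrix.mul_assoc, ← Matrix.mul_assoc Eᴴ, hE,
      Matrix.one_mul]
  rw [traceNorm_eq_re_trace_of_mul_self_eq hD hDD, trace_smul, trace_kronecker, trace_one,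
    trace_mul_comm, hE, trace_one]
  by_cases hm : m = 0 <;> simp [hm]

theorem negativity_maxEntangledState (hm : 2 ≤ m) (hE : Eᴴ * E = 1) :
    negativity (maxEntangledState E) = 1 := by
  have hm₁ : (m : ℝ) - 1 ≠ 0 := by
    have : (2 : ℝ) ≤ m := by exact_mod_cast hm
    linarith
  rw [negativity, traceNorm_ptranspose_maxEntangledState hE, div_self hm₁]

theorem hsNormSq_sub_piA_maxEntangledState (hψ : IsONB ψ) (hE : Eᴴ * E = 1) :
    hsNormSq (maxEntangledState E - piA ψ (maxEntangledState E)) = ((m : ℝ) - 1) / m := by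
  rw [maxEntangledState_eq_schmidtFrame hψ,
    piA_mul_mul_conjTranspose fun k => proj_kronecker_one_mul_schmidtFrame hψ k,
    ← Matrix.sub_mul, ← Matrix.mul_sub,
    hsNormSq_mul_mul_conjTranspose (conjTranspose_schmidtFrame_mul_self hψ hE),
    hsNormSq_eq_sum_normSq]
  simp only [Matrix.sub_apply, Matrix.smul_apply, diagonal_apply, diag_apply, vecMulVec_apply,
    Pi.one_apply, mul_one, smul_eq_mul]
  have hentry : ∀ k l : Fin m,
      Complex.normSq ((m : ℂ)⁻¹ - if k = l then (m : ℂ)⁻¹ else 0) =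
        if k = l then 0 else (m : ℝ)⁻¹ ^ 2 := by
    intro k l
    by_cases h : k = l <;> simp [h, sq]
  simp only [hentry, Finset.sum_ite, Finset.sum_const_zero, Finset.sum_const, zero_add]
  rcases eq_or_ne m 0 with rfl | hm
  · simp
  · simp [Finset.filter_ne, Nat.cast_pred (Nat.pos_of_ne_zero hm)]
    field_simp

theorem gd_maxEntangledState (hm : 2 ≤ m) (hE : Eᴴ * E = 1) : gd (maxEntangledState E) = 1 := by
  have : Nonempty {ψ : Fin m → Fin m → ℂ // IsONB ψ} :=
    ⟨⟨(1 : Matrix (Fin m) (Fin m) ℂ), isONB_one⟩⟩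
  have hm₂ : (2 : ℝ) ≤ m := by exact_mod_cast hm
  have hm₀ : (m : ℝ) ≠ 0 := by linarith
  have hm₁ : (m : ℝ) - 1 ≠ 0 := by linarith
  rw [gd, iInf_congr fun ψ => hsNormSq_sub_piA_maxEntangledState ψ.2 hE, ciInf_const]
  field_simp

end MaximallyEntangled

theorem stmt7 (m n : ℕ) (hm : 2 ≤ m) (hmn : m ≤ n)
    (ρ : Matrix (Fin m × Fin n) (Fin m × Fin n) ℂ)
    (hρ : ρ = ((1 : ℂ) / (m : ℂ)) • ∑ i : Fin m, ∑ j : Fin m,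
      (Matrix.single i j (1 : ℂ)) ⊗ₖ
      (Matrix.single (Fin.castLE hmn i) (Fin.castLE hmn j) (1 : ℂ))) :
    IsState ρ ∧ negativity ρ = 1 ∧ gd ρ = 1 ∧
      negativity ρ ^ 2 - gd ρ = 0 := by
  have hE := conjTranspose_submatrix_one_mul_self (R := ℂ) (Fin.castLE_injective hmn)
  obtain rfl :
      ρ = maxEntangledState ((1 : Matrix (Fin n) (Fin n) ℂ).submatrix id (Fin.castLE hmn)) := by
    rw [hρ, sum_single_kronecker_single, one_div, maxEntangledState]
  have hN := negativity_maxEntangledState hm hE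
  have hD := gd_maxEntangledState hm hE
  exact ⟨isState_maxEntangledState (by omega) hE, hN, hD, by rw [hN, hD]; norm_num⟩

end
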